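/- (Clarkson's inequality, case 1 < p < 2, pointwise form) For 1 < p < 2 and real numbers a, b: |(a − b)/2|^{p/(p−1)} + |(a + b)/2|^{p/(p−1)} ≤ ((1/2)|a|^p + (1/2)|b|^p)^{1/(p−1)}. -/

import Mathlib

/-!
Complex interpolation. By symmetry it suffices to show `R ≤ 2 S ^ (q - 1)` for `0 < b < a`, where
`R = (a + b) ^ q + (a - b) ^ q` and `S = a ^ p + b ^ p`. With `w = (1 + z) / 2`, the entire function
`f z = (a ^ (p w) + b ^ (p w)) (a + b) ^ (q w) + (a ^ (p w) - b ^ (p w)) (a - b) ^ (q w)`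
is bounded on the strip `0 ≤ re z ≤ 1`; on `re z = 0` Cauchy–Schwarz and the parallelogram law give
`‖f z‖ ≤ √(2 S) √R`, on `re z = 1` the triangle inequality gives `‖f z‖ ≤ S R`, and at
`θ = 2 / p - 1` (where `p w = 1`, `q w = q - 1`) we have `f θ = R`. The three-lines theorem then gives
`R ≤ (2 S R) ^ (1 / q) (S R) ^ θ`, which rearranges to `R ≤ 2 S ^ (q - 1)`.
-/

open Real Complex.HadamardThreeLines

lemma norm_add_mul_add_sub_mul_le (α β μ ν : ℂ) :
    ‖(α + β) * μ + (α - β) * ν‖ ≤ √(2 * (‖α‖ ^ 2 + ‖β‖ ^ 2)) * √(‖μ‖ ^ 2 + ‖ν‖ ^ 2) :=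
  calc ‖(α + β) * μ + (α - β) * ν‖ ≤ ‖α + β‖ * ‖μ‖ + ‖α - β‖ * ‖ν‖ := by
        simpa only [norm_mul] using norm_add_le ((α + β) * μ) ((α - β) * ν)
    _ ≤ √(‖α + β‖ ^ 2 + ‖α - β‖ ^ 2) * √(‖μ‖ ^ 2 + ‖ν‖ ^ 2) := by
        simpa using Real.sum_mul_le_sqrt_mul_sqrt Finset.univ ![‖α + β‖, ‖α - β‖] ![‖μ‖, ‖ν‖]
    _ = √(2 * (‖α‖ ^ 2 + ‖β‖ ^ 2)) * √(‖μ‖ ^ 2 + ‖ν‖ ^ 2) := by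
        rw [parallelogram_law_with_norm ℝ]

noncomputable def interpPow (x s : ℝ) (z : ℂ) : ℂ := (x : ℂ) ^ ((s : ℂ) * ((1 + z) / 2))

section interpPow

variable {x : ℝ}

lemma differentiable_interpPow (hx : 0 < x) (s : ℝ) : Differentiable ℂ (interpPow x s) :=
  ((differentiable_const _).mul
    (((differentiable_const _).add differentiable_id).div_const 2)).const_cpow
      (Or.inl (Complex.ofReal_ne_zero.2 hx.ne'))

lemma norm_interpPow (hx : 0 < x) (s : ℝ) (z : ℂ) :
    ‖interpPow x s z‖ = x ^ (s * ((1 + z.re) / 2)) := by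
  simp [interpPow, Complex.norm_cpow_eq_rpow_re_of_pos hx]

lemma norm_interpPow_le_max (hx : 0 < x) (s : ℝ) {z : ℂ} (hz : z ∈ verticalClosedStrip 0 1) :
    ‖interpPow x s z‖ ≤ max (x ^ (s / 2)) (x ^ s) := by
  obtain ⟨h0, h1⟩ : 0 ≤ z.re ∧ z.re ≤ 1 := hz
  rw [norm_interpPow hx]
  refine (convexOn_rpow_left hx).le_max_of_mem_segment trivial trivial
    ⟨1 - z.re, z.re, by linarith, h0, by ring, ?_⟩
  simp only [smul_eq_mul]
  ring

lemma sq_norm_interpPow_of_re_eq_zero (hx : 0 < x) (s : ℝ) {z : ℂ} (hz : z.re = 0) :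
    ‖interpPow x s z‖ ^ 2 = x ^ s := by
  rw [norm_interpPow hx, hz, ← Real.rpow_mul_natCast hx.le]
  congr 1
  push_cast
  ring

lemma norm_interpPow_of_re_eq_one (hx : 0 < x) (s : ℝ) {z : ℂ} (hz : z.re = 1) :
    ‖interpPow x s z‖ = x ^ s := by
  rw [norm_interpPow hx, hz]
  norm_num

lemma interpPow_ofReal (hx : 0 ≤ x) (s t : ℝ) :
    interpPow x s t = ((x ^ (s * ((1 + t) / 2)) : ℝ) : ℂ) := by
  rw [interpPow, Complex.ofReal_cpow hx]
  push_cast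
  rfl

end interpPow

noncomputable def clarksonInterpolant (p q a b : ℝ) (z : ℂ) : ℂ :=
  (interpPow a p z + interpPow b p z) * interpPow (a + b) q z
    + (interpPow a p z - interpPow b p z) * interpPow (a - b) q z

section clarksonInterpolant

variable {p q a b : ℝ}

lemma differentiable_clarksonInterpolant (hb : 0 < b) (hba : b < a) :
    Differentiable ℂ (clarksonInterpolant p q a b) := by
  have ha := differentiable_interpPow (hb.trans hba) p
  have hb := differentiable_interpPow hb p
  have hu := differentiable_interpPow (by linarith : 0 < a + b) q
  have hv := differentiable_interpPow (sub_pos.2 hba) q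
  exact ((ha.add hb).mul hu).add ((ha.sub hb).mul hv)

lemma norm_clarksonInterpolant_le (z : ℂ) :
    ‖clarksonInterpolant p q a b z‖ ≤ (‖interpPow a p z‖ + ‖interpPow b p z‖)
      * (‖interpPow (a + b) q z‖ + ‖interpPow (a - b) q z‖) :=
  calc ‖clarksonInterpolant p q a b z‖
      ≤ ‖interpPow a p z + interpPow b p z‖ * ‖interpPow (a + b) q z‖
        + ‖interpPow a p z - interpPow b p z‖ * ‖interpPow (a - b) q z‖ := by
        simpa only [clarksonInterpolant, norm_mul] using norm_add_le
          ((interpPow a p z + interpPow b p z) * interpPow (a + b) q z)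
          ((interpPow a p z - interpPow b p z) * interpPow (a - b) q z)
    _ ≤ (‖interpPow a p z‖ + ‖interpPow b p z‖) * ‖interpPow (a + b) q z‖
        + (‖interpPow a p z‖ + ‖interpPow b p z‖) * ‖interpPow (a - b) q z‖ := by
        gcongr
        exacts [norm_add_le _ _, norm_sub_le _ _]
    _ = _ := by ring

lemma bddAbove_norm_clarksonInterpolant (hb : 0 < b) (hba : b < a) :
    BddAbove ((norm ∘ clarksonInterpolant p q a b) '' verticalClosedStrip 0 1) := by
  have ha : 0 < a := hb.trans hba
  refine ⟨(max (a ^ (p / 2)) (a ^ p) + max (b ^ (p / 2)) (b ^ p))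
    * (max ((a + b) ^ (q / 2)) ((a + b) ^ q) + max ((a - b) ^ (q / 2)) ((a - b) ^ q)), ?_⟩
  rintro _ ⟨z, hz, rfl⟩
  refine (norm_clarksonInterpolant_le z).trans ?_
  gcongr
  exacts [norm_interpPow_le_max ha p hz, norm_interpPow_le_max hb p hz,
    norm_interpPow_le_max (by linarith) q hz, norm_interpPow_le_max (by linarith) q hz]

lemma norm_clarksonInterpolant_le_of_re_eq_zero (hb : 0 < b) (hba : b < a) {z : ℂ}
    (hz : z.re = 0) :
    ‖clarksonInterpolant p q a b z‖ ≤ √(2 * (a ^ p + b ^ p)) * √((a + b) ^ q + (a - b) ^ q) := by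
  have h := norm_add_mul_add_sub_mul_le (interpPow a p z) (interpPow b p z)
    (interpPow (a + b) q z) (interpPow (a - b) q z)
  rwa [sq_norm_interpPow_of_re_eq_zero (hb.trans hba) p hz, sq_norm_interpPow_of_re_eq_zero hb p hz,
    sq_norm_interpPow_of_re_eq_zero (by linarith) q hz,
    sq_norm_interpPow_of_re_eq_zero (sub_pos.2 hba) q hz] at h

lemma norm_clarksonInterpolant_le_of_re_eq_one (hb : 0 < b) (hba : b < a) {z : ℂ}
    (hz : z.re = 1) :
    ‖clarksonInterpolant p q a b z‖ ≤ (a ^ p + b ^ p) * ((a + b) ^ q + (a - b) ^ q) := by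
  have h := norm_clarksonInterpolant_le (p := p) (q := q) (a := a) (b := b) z
  rwa [norm_interpPow_of_re_eq_one (hb.trans hba) p hz, norm_interpPow_of_re_eq_one hb p hz,
    norm_interpPow_of_re_eq_one (by linarith) q hz,
    norm_interpPow_of_re_eq_one (sub_pos.2 hba) q hz] at h

lemma clarksonInterpolant_two_div_sub_one (hpq : p.HolderConjugate q) (hb : 0 < b)
    (hba : b < a) :
    clarksonInterpolant p q a b (2 / p - 1 : ℝ) = (((a + b) ^ q + (a - b) ^ q : ℝ) : ℂ) := by
  have hp : p * ((1 + (2 / p - 1)) / 2) = 1 := by field_simp [hpq.ne_zero]; ring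
  have hq : q * ((1 + (2 / p - 1)) / 2) = q - 1 := by
    rw [hpq.conjugate_eq]; field_simp [hpq.ne_zero, hpq.sub_one_ne_zero]; ring
  have hu : 0 < a + b := by linarith
  have hv : 0 < a - b := sub_pos.2 hba
  simp only [clarksonInterpolant, interpPow_ofReal hb.le, interpPow_ofReal (hb.trans hba).le,
    interpPow_ofReal hu.le, interpPow_ofReal hv.le, hp, hq, Real.rpow_one,
    Real.rpow_sub_one hu.ne', Real.rpow_sub_one hv.ne']
  have h : (a + b) * ((a + b) ^ q / (a + b)) + (a - b) * ((a - b) ^ q / (a - b))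
      = (a + b) ^ q + (a - b) ^ q := by
    field_simp
  exact_mod_cast h

end clarksonInterpolant

section

variable {p q : ℝ}

lemma add_rpow_add_sub_rpow_le_of_pos_of_lt (hpq : p.HolderConjugate q) (hp : p ≤ 2) {a b : ℝ}
    (hb : 0 < b) (hba : b < a) :
    (a + b) ^ q + (a - b) ^ q ≤ 2 * (a ^ p + b ^ p) ^ (q - 1) := by
  set S := a ^ p + b ^ p
  set R := (a + b) ^ q + (a - b) ^ q
  have ha : 0 < a := hb.trans hba
  have hS : 0 < S := by positivity
  have hR : 0 < R := by have := sub_pos.2 hba; positivity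
  have hθ : ((2 / p - 1 : ℝ) : ℂ) ∈ verticalClosedStrip 0 1 := by
    have := hpq.pos
    simp only [verticalClosedStrip, Set.mem_preimage, Complex.ofReal_re, Set.mem_Icc]
    constructor
    · rw [sub_nonneg, le_div_iff₀ this]; linarith
    · rw [sub_le_iff_le_add, div_le_iff₀ this]; linarith [hpq.lt]
  have key := norm_le_interp_of_mem_verticalClosedStrip₀₁' _ hθ
    (differentiable_clarksonInterpolant hb hba).diffContOnCl
    (bddAbove_norm_clarksonInterpolant hb hba)
    (fun z hz ↦ norm_clarksonInterpolant_le_of_re_eq_zero (p := p) (q := q) hb hba hz)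
    (fun z hz ↦ norm_clarksonInterpolant_le_of_re_eq_one (p := p) (q := q) hb hba hz)
  rw [clarksonInterpolant_two_div_sub_one hpq hb hba, Complex.norm_of_nonneg hR.le,
    Complex.ofReal_re] at key
  -- Taking logarithms turns the three-lines bound into a linear inequality.
  have hlog := Real.log_le_log hR key
  rw [Real.log_mul (by positivity) (by positivity), Real.log_rpow (by positivity),
    Real.log_rpow (by positivity), Real.log_mul (by positivity) (by positivity),
    Real.log_sqrt (by positivity), Real.log_sqrt hR.le, Real.log_mul two_ne_zero hS.ne',
    Real.log_mul hS.ne' hR.ne'] at hlog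
  rw [← Real.log_le_log_iff hR (by positivity), Real.log_mul two_ne_zero (by positivity),
    Real.log_rpow hS]
  have e : Real.log 2 + (q - 1) * Real.log S - Real.log R
      = q * ((1 - (2 / p - 1)) * ((Real.log 2 + Real.log S) / 2 + Real.log R / 2)
        + (2 / p - 1) * (Real.log S + Real.log R) - Real.log R) := by
    rw [hpq.conjugate_eq]
    field_simp [hpq.ne_zero, hpq.sub_one_ne_zero]
    ring
  linarith [mul_nonneg hpq.symm.nonneg (sub_nonneg.2 hlog)]

lemma add_rpow_add_sub_rpow_le (hpq : p.HolderConjugate q) (hp : p ≤ 2) {a b : ℝ}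
    (hb : 0 ≤ b) (hba : b ≤ a) :
    (a + b) ^ q + (a - b) ^ q ≤ 2 * (a ^ p + b ^ p) ^ (q - 1) := by
  have hpq' : p * (q - 1) = q := by rw [mul_sub, mul_one, hpq.mul_eq_add]; ring
  rcases hb.eq_or_lt with rfl | hb
  · rw [add_zero, sub_zero, Real.zero_rpow hpq.ne_zero, add_zero, ← Real.rpow_mul hba, hpq']
    linarith
  rcases hba.eq_or_lt with rfl | hba
  · rw [sub_self, Real.zero_rpow hpq.symm.ne_zero, add_zero, ← two_mul, ← two_mul,
      Real.mul_rpow zero_le_two hb.le, Real.mul_rpow zero_le_two (by positivity),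
      ← Real.rpow_mul hb.le, hpq', Real.rpow_sub_one two_ne_zero]
    exact le_of_eq (by ring)
  exact add_rpow_add_sub_rpow_le_of_pos_of_lt hpq hp hb hba

lemma abs_add_rpow_add_abs_sub_rpow_le (hpq : p.HolderConjugate q) (hp : p ≤ 2) (x y : ℝ) :
    |x + y| ^ q + |x - y| ^ q ≤ 2 * (|x| ^ p + |y| ^ p) ^ (q - 1) := by
  wlog hy : 0 ≤ y generalizing y
  · simpa [← sub_eq_add_neg, add_comm] using this (-y) (by linarith)
  wlog hx : 0 ≤ x generalizing x
  · have h := this (-x) (by linarith)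
    rwa [neg_add_eq_sub, abs_sub_comm, ← neg_add', abs_neg, abs_neg, add_comm] at h
  wlog hyx : y ≤ x generalizing x y
  · have h := this x hx y hy (by linarith)
    rwa [add_comm y, abs_sub_comm, add_comm (|y| ^ p)] at h
  rw [abs_of_nonneg hx, abs_of_nonneg hy, abs_of_nonneg (by linarith : 0 ≤ x + y),
    abs_of_nonneg (sub_nonneg.2 hyx)]
  exact add_rpow_add_sub_rpow_le hpq hp hy hyx

end

theorem stmt11 (p : ℝ) (hp1 : 1 < p) (hp2 : p < 2) (a b : ℝ) :
    |(a - b) / 2| ^ (p / (p - 1)) + |(a + b) / 2| ^ (p / (p - 1))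
      ≤ ((1 / 2) * |a| ^ p + (1 / 2) * |b| ^ p) ^ (1 / (p - 1)) := by
  set q := p / (p - 1) with hq
  have hpq : p.HolderConjugate q := (Real.holderConjugate_iff_eq_conjExponent hp1).2 rfl
  have hexp : 1 / (p - 1) = q - 1 := by
    rw [hq]
    field_simp [hpq.sub_one_ne_zero]
    ring
  rw [hexp, abs_div, abs_div, abs_two, Real.div_rpow (abs_nonneg _) zero_le_two,
    Real.div_rpow (abs_nonneg _) zero_le_two, ← add_div, ← mul_add, one_div,
    Real.mul_rpow (by norm_num) (by positivity), div_le_iff₀ (by positivity)]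
  calc |a - b| ^ q + |a + b| ^ q
      ≤ 2 * (|a| ^ p + |b| ^ p) ^ (q - 1) := by
        rw [add_comm]
        exact abs_add_rpow_add_abs_sub_rpow_le hpq hp2.le a b
    _ = 2⁻¹ ^ (q - 1) * (|a| ^ p + |b| ^ p) ^ (q - 1) * 2 ^ q := by
        rw [Real.inv_rpow zero_le_two, Real.rpow_sub_one two_ne_zero]
        field_simp
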